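/- Let V be a finitely generated FI-module with generating degree gd(V). Then gd(DV) = gd(V) − 1 if gd(V) ≥ 1, and DV = 0 if gd(V) ≤ 0 (i.e., V is generated in degree 0 or V = 0). -/

import Mathlib

open CategoryTheory CategoryTheory.Limits

def FI : Type := ℕ
def FI.of : ℕ → FI := id
def FI.n : FI → ℕ := id
instance : Category FI where
  Hom m n := Fin m.n ↪ Fin n.n
  id _ := Function.Embedding.refl _
  comp f g := f.trans g
  id_comp _ := rfl
  comp_id _ := rfl
  assoc _ _ _ := rfl
abbrev FIMod (k : Type) [CommRing k] := FI ⥤ ModuleCat.{0} k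

/-- Extension of an injection `[m] → [n]` to `[m+1] → [n+1]` fixing the new first point. -/
def extEmb {m n : ℕ} (f : Fin m ↪ Fin n) : Fin (m + 1) ↪ Fin (n + 1) :=
  ⟨fun x => Fin.cases 0 (fun r => (f r).succ) x, by
    intro a b h
    induction a using Fin.cases with
    | zero =>
      induction b using Fin.cases with
      | zero => rfl
      | succ j => simp at h; exact absurd h.symm (Fin.succ_ne_zero _)
    | succ i =>
      induction b using Fin.cases with
      | zero => simp at h <;> exact absurd h (Fin.succ_ne_zero _)
      | succ j =>
        simp only [Fin.cases_succ] at h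
        exact congrArg Fin.succ (f.injective (Fin.succ_injective _ h))⟩

@[simp] lemma extEmb_zero {m n : ℕ} (f : Fin m ↪ Fin n) : extEmb f 0 = 0 := rfl
@[simp] lemma extEmb_succ {m n : ℕ} (f : Fin m ↪ Fin n) (r : Fin m) :
    extEmb f r.succ = (f r).succ := by simp [extEmb] <;> rfl

/-- Extensionality for morphisms in `FI`. -/
lemma FI.hom_ext {m n : FI} {f g : Fin m.n ↪ Fin n.n} (h : ∀ x, f x = g x) :
    f = g := DFunLike.ext f g h

/-- The self-embedding `ι : FI → FI`, `[n] ↦ [n+1]`. -/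
def iota : FI ⥤ FI where
  obj n := FI.of (n.n + 1)
  map f := extEmb f
  map_id n := by
    refine FI.hom_ext fun x => ?_
    induction x using Fin.cases <;> rfl
  map_comp {a b c} f g := by
    refine FI.hom_ext fun x => ?_
    induction x using Fin.cases with
    | zero => rfl
    | succ i =>
      show extEmb (f.trans g) i.succ = extEmb g (extEmb f i.succ)
      simp

variable (k : Type) [CommRing k]

/-- The shift functor `Σ` on `FI`-modules. -/
def shiftF : FIMod k ⥤ FIMod k := (Functor.whiskeringLeft FI FI (ModuleCat k)).obj iota

/-- The natural transformation `Id → ι` given by the inclusions `[n] ↪ [n+1]`, `r ↦ r+1`. -/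
def piTrans : 𝟭 FI ⟶ iota where
  app n := ⟨Fin.succ, Fin.succ_injective _⟩
  naturality m n f := by
    refine FI.hom_ext fun x => ?_
    simp [iota, extEmb, CategoryStruct.comp, CategoryStruct.id] <;> rfl

/-- The natural map `V → ΣV`. -/
def toShift (V : FIMod k) : V ⟶ (shiftF k).obj V :=
  V.leftUnitor.inv ≫ Functor.whiskerRight piTrans V

/-- `V → ΣV` as a natural transformation of endofunctors. -/
def natToShift : 𝟭 (FIMod k) ⟶ shiftF k where
  app V := toShift k V
  naturality V W φ := by
    ext n
    simp only [Functor.id_obj, Functor.id_map, toShift, shiftF, Functor.whiskeringLeft_obj_obj,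
      Functor.comp_obj, Category.assoc, NatTrans.comp_app, Functor.leftUnitor_inv_app,
      Functor.whiskerRight_app, Functor.whiskeringLeft_obj_map, Functor.whiskerLeft_app, Category.id_comp]
    first
      | exact (φ.naturality (piTrans.app n)).symm
      | exact congrArg (fun h => ModuleCat.Hom.hom h _) (φ.naturality (piTrans.app n)).symm

/-- The derivative `DV`, the cokernel of `V → ΣV`. -/
noncomputable def Dobj (V : FIMod k) : FIMod k := cokernel (toShift k V)

/-- The derivative functor `D`. -/
noncomputable def Dfun : FIMod k ⥤ FIMod k where
  obj V := Dobj k V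
  map {V W} φ := cokernel.map _ _ φ ((shiftF k).map φ) ((natToShift k).naturality φ).symm
  map_id V := by
    apply coequalizer.hom_ext
    simp [Dobj]
  map_comp {U V W} φ ψ := by
    apply coequalizer.hom_ext
    simp [Dobj]

variable (k : Type) [CommRing k]

/-- An `FI`-submodule of an `FI`-module. -/
structure FISub {k : Type} [CommRing k] (V : FIMod k) where
  sub : ∀ n : FI, Submodule k (V.obj n)
  map_mem : ∀ {m n : FI} (f : m ⟶ n) (v : V.obj m), v ∈ sub m → (V.map f) v ∈ sub n

/-- `V` is generated in degrees `≤ N`. -/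
def GeneratedIn {k : Type} [CommRing k] (V : FIMod k) (N : ℕ) : Prop :=
  ∀ W : FISub V, (∀ i : ℕ, i ≤ N → ∀ v : V.obj (FI.of i), v ∈ W.sub (FI.of i)) →
    ∀ (n : FI) (v : V.obj n), v ∈ W.sub n

/-- `V` is a finitely generated `FI`-module. -/
def FG {k : Type} [CommRing k] (V : FIMod k) : Prop :=
  ∃ S : Finset ((n : ℕ) × V.obj (FI.of n)),
    ∀ W : FISub V, (∀ s ∈ S, s.2 ∈ W.sub (FI.of s.1)) → ∀ (n : FI) (v : V.obj n), v ∈ W.sub n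

/-- `V` is torsionless: no nonzero element is killed by an injection. -/
def Torsionless {k : Type} [CommRing k] (V : FIMod k) : Prop :=
  ∀ (i : ℕ) (v : V.obj (FI.of i)), v ≠ 0 →
    ∀ α : FI.of i ⟶ FI.of (i + 1), (V.map α) v ≠ 0


instance (k : Type) [CommRing k] : HasFiniteBiproducts (FIMod k) :=
  Abelian.hasFiniteBiproducts

variable (k : Type) [CommRing k]

/-- The free (representable) `FI`-module `M(i)`, the linearization of `FI(i,−)`. -/
noncomputable def Mrep (i : ℕ) : FIMod k where
  obj n := ModuleCat.of k ((Fin i ↪ Fin n.n) →₀ k)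
  map {m n} f := ModuleCat.ofHom (Finsupp.lmapDomain k k fun e : Fin i ↪ Fin m.n => e.trans f)
  map_id n := by
    have : (fun e : Fin i ↪ Fin n.n => e.trans (𝟙 n)) = id := by
      funext e; ext x; rfl
    show ModuleCat.ofHom (Finsupp.lmapDomain k k _) = _
    rw [this, Finsupp.lmapDomain_id]
    rfl
  map_comp {a b c} f g := by
    show ModuleCat.ofHom (Finsupp.lmapDomain k k _) = _
    have : (fun e : Fin i ↪ Fin a.n => e.trans (f ≫ g))
        = (fun e : Fin i ↪ Fin b.n => e.trans g) ∘ (fun e => e.trans f) := by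
      funext e; ext x; rfl
    rw [this, Finsupp.lmapDomain_comp]
    rfl

lemma FI.le_of_hom {m n : FI} (f : m ⟶ n) : m.n ≤ n.n := by
  simpa using Fintype.card_le_of_embedding (f : Fin m.n ↪ Fin n.n)

/-- The submodule `(JV)_n ⊆ V_n` spanned by images from strictly lower degrees. -/
def Jsub {k : Type} [CommRing k] (V : FIMod k) (n : FI) : Submodule k (V.obj n) :=
  ⨆ (m : FI) (_ : m.n < n.n) (f : m ⟶ n), LinearMap.range (V.map f).hom

lemma Jsub_le_comap {k : Type} [CommRing k] (V : FIMod k) {m n : FI} (f : m ⟶ n) :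
    Jsub V m ≤ (Jsub V n).comap (V.map f).hom := by
  refine iSup_le fun m' => iSup_le fun hm' => iSup_le fun g => ?_
  rintro x ⟨y, rfl⟩
  simp only [Submodule.mem_comap]
  have h1 : (V.map f).hom ((V.map g).hom y) = (V.map (g ≫ f)).hom y := by
    rw [V.map_comp]; rfl
  rw [h1]
  have h2 : m'.n < n.n := lt_of_lt_of_le hm' (FI.le_of_hom f)
  refine Submodule.mem_iSup_of_mem m' ?_
  refine Submodule.mem_iSup_of_mem h2 ?_
  exact Submodule.mem_iSup_of_mem (g ≫ f) ⟨y, rfl⟩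

/-- The degreewise quotient `H₀(V) = V/JV` as an `FI`-module. -/
noncomputable def H0obj {k : Type} [CommRing k] (V : FIMod k) : FIMod k where
  obj n := ModuleCat.of k (V.obj n ⧸ Jsub V n)
  map {m n} f := ModuleCat.ofHom (Submodule.mapQ _ _ (V.map f).hom (Jsub_le_comap V f))
  map_id n := by
    have h : V.map (𝟙 n) = 𝟙 (V.obj n) := V.map_id n
    apply ModuleCat.hom_ext
    refine Submodule.linearMap_qext _ ?_
    ext x
    show Submodule.Quotient.mk ((V.map (𝟙 n)).hom x) = _
    rw [h]
    rfl
  map_comp {a b c} f g := by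
    have h : V.map (f ≫ g) = V.map f ≫ V.map g := V.map_comp f g
    apply ModuleCat.hom_ext
    refine Submodule.linearMap_qext _ ?_
    ext x
    show Submodule.Quotient.mk ((V.map (f ≫ g)).hom x) = _
    rw [h]
    rfl

/-- The functor `H₀ = ℂ̃₀ ⊗_{ℂ̃} − : FI-Mod → FI-Mod`. -/
noncomputable def H0Functor (k : Type) [CommRing k] : FIMod k ⥤ FIMod k where
  obj := H0obj
  map {V W} φ :=
    { app := fun n => ModuleCat.ofHom (Submodule.mapQ _ _ (φ.app n).hom (by
        refine iSup_le fun m => iSup_le fun hm => iSup_le fun g => ?_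
        rintro x ⟨y, rfl⟩
        simp only [Submodule.mem_comap]
        have h1 : (φ.app n).hom ((V.map g).hom y) = (W.map g).hom ((φ.app m).hom y) :=
          congrArg (fun h => ModuleCat.Hom.hom h y) (φ.naturality g)
        rw [h1]
        refine Submodule.mem_iSup_of_mem m (Submodule.mem_iSup_of_mem hm ?_)
        exact Submodule.mem_iSup_of_mem g ⟨_, rfl⟩)),
      naturality := by
        intro m n f
        apply ModuleCat.hom_ext
        refine Submodule.linearMap_qext _ ?_
        ext x
        have h : (φ.app n).hom ((V.map f).hom x) = (W.map f).hom ((φ.app m).hom x) :=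
          congrArg (fun h => ModuleCat.Hom.hom h x) (φ.naturality f)
        show Submodule.Quotient.mk ((φ.app n).hom ((V.map f).hom x)) = _
        rw [h]
        rfl }
  map_id V := by
    ext n : 2
    apply ModuleCat.hom_ext
    refine Submodule.linearMap_qext _ ?_
    ext x
    rfl
  map_comp {U V W} φ ψ := by
    ext n : 2
    apply ModuleCat.hom_ext
    refine Submodule.linearMap_qext _ ?_
    ext x
    rfl

instance (k : Type) [CommRing k] : (H0Functor k).Additive where
  map_add := by
    intro V W φ ψ
    ext n : 2
    apply ModuleCat.hom_ext
    refine Submodule.linearMap_qext _ ?_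
    ext x
    show Submodule.Quotient.mk ((φ.app n).hom x + (ψ.app n).hom x) =
      (((H0Functor k).map φ).app n).hom (Submodule.Quotient.mk x) +
      (((H0Functor k).map ψ).app n).hom (Submodule.Quotient.mk x)
    rw [Submodule.Quotient.mk_add]
    rfl

/-- The homology functor `H_s(−) = Tor_s^{ℂ̃}(ℂ̃₀, −)`, as the `s`-th left derived
functor of `H₀`. -/
noncomputable def Hs (k : Type) [CommRing k] [EnoughProjectives (FIMod k)] (s : ℕ) :
    FIMod k ⥤ FIMod k :=
  (H0Functor k).leftDerived s

/-- Strictly monotone injections `[i] → [n]`, a set of representatives for the orbits of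
the right action of `S_i` on `FI(i,n)`. -/
def OrdInj (i n : ℕ) : Type := {e : Fin i ↪ Fin n // StrictMono e}

noncomputable instance (i n : ℕ) : Fintype (OrdInj i n) := by
  classical
  unfold OrdInj
  infer_instance

/-- The canonical map `⊕_{e ∈ OrdInj(i,n)} V_i → V_n`, `(v_e) ↦ Σ_e e·v_e`.
It is bijective for every `n` exactly when `V` is the induced module
`ℂ̃ ⊗_{k[S_i]} V_i`. -/
noncomputable def basicMap {k : Type} [CommRing k] (V : FIMod k) (i n : ℕ) :
    (OrdInj i n → V.obj (FI.of i)) →ₗ[k] V.obj (FI.of n) :=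
  ∑ e : OrdInj i n, (V.map (e.1 : FI.of i ⟶ FI.of n)).hom.comp (LinearMap.proj e)

/-- `V` is (isomorphic to) a basic `♯`-filtered module `ℂ̃ ⊗_{k[S_i]} T` with `T = V_i`. -/
def BasicSharp {k : Type} [CommRing k] (V : FIMod k) (i : ℕ) : Prop :=
  (∀ j : ℕ, j < i → Subsingleton (V.obj (FI.of j))) ∧
    ∀ n : ℕ, Function.Bijective (basicMap V i n)

/-- `V` admits a filtration of length `m` whose successive quotients are basic
`♯`-filtered modules. -/
def SharpChain {k : Type} [CommRing k] : ℕ → FIMod k → Prop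
  | 0, V => IsZero V
  | m + 1, V => ∃ (U W : FIMod k) (f : U ⟶ V) (g : V ⟶ W) (w : f ≫ g = 0),
      (ShortComplex.mk f g w).ShortExact ∧ SharpChain m U ∧ ∃ i, BasicSharp W i

/-- `V` is a `♯`-filtered `FI`-module. -/
def SharpFiltered {k : Type} [CommRing k] (V : FIMod k) : Prop :=
  ∃ m, SharpChain m V

/-- `pdLE n M` : `M` has projective dimension `≤ n`. -/
noncomputable def pdLE {C : Type*} [Category C] [Abelian C] : ℕ → C → Prop
  | 0, M => Projective M
  | n + 1, M => ∃ (P : C) (f : P ⟶ M), Projective P ∧ Epi f ∧ pdLE n (kernel f)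

/-- The `d`-th iterated shift `Σ_d V`. -/
def shiftIter (k : Type) [CommRing k] : ℕ → FIMod k → FIMod k
  | 0, V => V
  | d + 1, V => (shiftF k).obj (shiftIter k d V)

/-- A permutation of `[i]` as a morphism in `FI`. -/
def permHom (i : ℕ) (g : Equiv.Perm (Fin i)) : FI.of i ⟶ FI.of i := g.toEmbedding

/-- The representation of the symmetric group `S_i` on `V_i` coming from the
`FI`-module structure. -/
def permRep {k : Type} [CommRing k] (V : FIMod k) (i : ℕ) :
    Representation k (Equiv.Perm (Fin i)) (V.obj (FI.of i)) where
  toFun g := (V.map (permHom i g)).hom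
  map_one' := by
    have h1 : permHom i 1 = 𝟙 (FI.of i) := rfl
    show (V.map (permHom i 1)).hom = (1 : Module.End k (V.obj (FI.of i)))
    rw [h1, V.map_id]; rfl
  map_mul' g h := by
    have h1 : permHom i (g * h) = permHom i h ≫ permHom i g := rfl
    show (V.map (permHom i (g * h))).hom = (V.map (permHom i h) ≫ V.map (permHom i g)).hom
    rw [h1, V.map_comp]

/-!
`(DV)_j` is `V_{j+1}` modulo the image of `V_j` under `r ↦ r + 1`. An injection
`f : [i] → [j+1]` either misses `0`, and then factors through `[j] ↪ [j+1]`, so that `f·v` dies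
in `DV`; or, after a permutation of `[i]`, it is `ι g` for some `g : [i-1] → [j]`, so that the
class of `f·v` is `g` applied to a class in `(DV)_{i-1}`. Hence `DV` is generated in degrees
`≤ n - 1` when `V` is generated in degrees `≤ n`.

Conversely, if `DV` is generated in degrees `≤ m` (or `DV = 0`), an `FI`-submodule `U` of `V`
containing `V` in degrees `≤ m + 1` (resp. `0`) satisfies `V_{j+1} = U_{j+1} + V_j`, and induction
on `j` gives `U = V`.
-/

section Cokernel

universe u v

variable {R : Type u} [Ring R] {C : Type*} [Category C] {A B : C ⥤ ModuleCat.{v} R}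

lemma cokernel_π_app_surjective (φ : A ⟶ B) [HasCokernel φ] (j : C) :
    Function.Surjective ((cokernel.π φ).app j) :=
  (ModuleCat.epi_iff_surjective _).mp inferInstance

lemma cokernel_π_app_eq_zero_iff (φ : A ⟶ B) [HasCokernel φ] (j : C) (b : B.obj j) :
    (cokernel.π φ).app j b = 0 ↔ ∃ a, φ.app j a = b := by
  have hexact := (ShortComplex.exact_of_g_is_cokernel
    (ShortComplex.mk φ (cokernel.π φ) (cokernel.condition φ)) (cokernelIsCokernel φ)).map
      ((evaluation C (ModuleCat.{v} R)).obj j)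
  refine ⟨(ShortComplex.moduleCat_exact_iff _).mp hexact b, ?_⟩
  rintro ⟨a, rfl⟩
  exact ConcreteCategory.congr_hom (NatTrans.congr_app (cokernel.condition φ) j) a

lemma CategoryTheory.Functor.isZero_iff_forall_eq_zero (F : C ⥤ ModuleCat.{v} R) :
    IsZero F ↔ ∀ j (x : F.obj j), x = 0 := by
  simp only [Functor.isZero_iff, ModuleCat.isZero_iff_subsingleton]
  exact forall_congr' fun j => subsingleton_iff_forall_eq 0

end Cokernel

lemma Function.Embedding.exists_eq_trans_succEmb {α : Type*} {n : ℕ} (F : α ↪ Fin (n + 1))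
    (hF : ∀ a, F a ≠ 0) : ∃ g : α ↪ Fin n, F = g.trans (Fin.succEmb n) :=
  ⟨⟨fun a => (F a).pred (hF a), fun _ _ hab => F.injective (Fin.pred_inj.mp hab)⟩,
    DFunLike.ext _ _ fun a => (Fin.succ_pred (F a) (hF a)).symm⟩

lemma exists_eq_swap_trans_extEmb {m n : ℕ} (F : Fin (m + 1) ↪ Fin (n + 1)) {r : Fin (m + 1)}
    (hr : F r = 0) : ∃ g : Fin m ↪ Fin n, F = (Equiv.swap 0 r).toEmbedding.trans (extEmb g) := by
  set F' := (Equiv.swap 0 r).toEmbedding.trans F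
  have hF'0 : F' 0 = 0 := by simpa [F'] using hr
  obtain ⟨g, hg⟩ := ((Fin.succEmb m).trans F').exists_eq_trans_succEmb fun a h =>
    Fin.succ_ne_zero a (F'.injective (h.trans hF'0.symm))
  refine ⟨g, DFunLike.ext _ _ fun x => ?_⟩
  have hF' : ∀ y, F' y = extEmb g y := fun y => by
    induction y using Fin.cases with
    | zero => exact hF'0
    | succ y => exact DFunLike.congr_fun hg y
  simpa [F'] using hF' (Equiv.swap 0 r x)

namespace FISub

variable {k : Type} [CommRing k]

instance (V : FIMod k) : Bot (FISub V) :=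
  ⟨⟨fun _ => ⊥, fun _ _ hv => by simp_all⟩⟩

def map {A B : FIMod k} (φ : A ⟶ B) (U : FISub A) : FISub B where
  sub n := (U.sub n).map (φ.app n).hom
  map_mem f _ := by
    rintro ⟨a, ha, rfl⟩
    exact ⟨A.map f a, U.map_mem f a ha, NatTrans.naturality_apply φ f a⟩

def shift {V : FIMod k} (U : FISub V) : FISub ((shiftF k).obj V) where
  sub n := U.sub (iota.obj n)
  map_mem f := U.map_mem (iota.map f)

end FISub

section Derivative

variable {k : Type} [CommRing k] {V : FIMod k}

lemma toShift_app (n : FI) : (toShift k V).app n = V.map (piTrans.app n) :=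
  Category.id_comp _

lemma cokernel_π_toShift_app_map_mem {N : ℕ} (W : FISub (Dobj k V))
    (hW : ∀ i < N, ∀ w : (Dobj k V).obj (FI.of i), w ∈ W.sub (FI.of i))
    {i : ℕ} (hi : i ≤ N) {j : FI} (f : FI.of i ⟶ iota.obj j) (v : V.obj (FI.of i)) :
    (cokernel.π (toShift k V)).app j (V.map f v) ∈ W.sub j := by
  let F : Fin i ↪ Fin (j.n + 1) := f
  by_cases hF : ∃ r, F r = 0
  · obtain ⟨r, hr⟩ := hF
    obtain ⟨i, rfl⟩ := Nat.exists_eq_add_one_of_ne_zero r.pos.ne'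
    obtain ⟨g, hg⟩ := exists_eq_swap_trans_extEmb F hr
    let σ := permHom _ (Equiv.swap 0 r)
    let g' : FI.of i ⟶ j := g
    have hf : f = σ ≫ iota.map g' := hg
    have hclass : (cokernel.π (toShift k V)).app j (V.map f v) =
        (Dobj k V).map g' ((cokernel.π (toShift k V)).app _ (V.map σ v)) := by
      have hfv := ConcreteCategory.congr_hom (V.map_comp σ (iota.map g')) v
      rw [← hf] at hfv
      rw [hfv]
      exact NatTrans.naturality_apply (cokernel.π (toShift k V)) g' (V.map σ v)
    rw [hclass]
    exact W.map_mem _ _ (hW i hi _)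
  · push Not at hF
    obtain ⟨g, hg⟩ := F.exists_eq_trans_succEmb hF
    have hf : f = (g : FI.of i ⟶ j) ≫ piTrans.app j := hg
    have hfv := ConcreteCategory.congr_hom (V.map_comp (g : FI.of i ⟶ j) (piTrans.app j)) v
    rw [← hf, ← toShift_app] at hfv
    have hzero : (cokernel.π (toShift k V)).app j (V.map f v) = 0 :=
      (cokernel_π_app_eq_zero_iff (toShift k V) j _).mpr ⟨V.map g v, hfv.symm⟩
    rw [hzero]
    exact zero_mem _

lemma FISub.mem_Dobj_of_generatedIn {N : ℕ} (hV : GeneratedIn V N) (W : FISub (Dobj k V))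
    (hW : ∀ i < N, ∀ w : (Dobj k V).obj (FI.of i), w ∈ W.sub (FI.of i))
    (j : FI) (w : (Dobj k V).obj j) : w ∈ W.sub j := by
  obtain ⟨v, rfl⟩ := cokernel_π_app_surjective (toShift k V) j w
  -- the largest `FI`-submodule of `V` sent into `W` by `π ∘ V(f)` for every `f : n → [j' + 1]`
  let U : FISub V :=
    { sub n := ⨅ (j' : FI) (f : n ⟶ iota.obj j'),
        (W.sub j').comap (((cokernel.π (toShift k V)).app j').hom ∘ₗ (V.map f).hom)
      map_mem g v hv := by
        refine (Submodule.mem_iInf _).mpr fun j' => (Submodule.mem_iInf _).mpr fun f => ?_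
        have hgf := (Submodule.mem_iInf _).mp ((Submodule.mem_iInf _).mp hv j') (g ≫ f)
        rwa [V.map_comp] at hgf }
  have hU := hV U (fun i hi v => by
    simp only [U, Submodule.mem_iInf]
    exact fun j' f => cokernel_π_toShift_app_map_mem W hW hi f v) (iota.obj j) v
  have hid := (Submodule.mem_iInf _).mp ((Submodule.mem_iInf _).mp hU j) (𝟙 _)
  rwa [V.map_id] at hid

lemma FISub.mem_of_forall_mem_map_shift (U : FISub V)
    (h0 : ∀ v : V.obj (FI.of 0), v ∈ U.sub (FI.of 0))
    (hD : ∀ j w, w ∈ (U.shift.map (cokernel.π (toShift k V))).sub j) (n : FI) (v : V.obj n) :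
    v ∈ U.sub n := by
  suffices ∀ t (v : V.obj (FI.of t)), v ∈ U.sub (FI.of t) from this n.n v
  intro t
  induction t with
  | zero => exact h0
  | succ t ih =>
    intro (v : ((shiftF k).obj V).obj (FI.of t))
    obtain ⟨u, hu, hπ⟩ := hD (FI.of t) ((cokernel.π (toShift k V)).app _ v)
    obtain ⟨x, hx⟩ := (cokernel_π_app_eq_zero_iff (toShift k V) (FI.of t) (v - u)).mp
      (by rw [map_sub, hπ, sub_self])
    rw [toShift_app] at hx
    rw [← sub_add_cancel v u, ← hx]
    exact add_mem (U.map_mem _ x (ih x)) hu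

theorem generatedIn_Dobj_of_generatedIn_succ {m : ℕ} (h : GeneratedIn V (m + 1)) :
    GeneratedIn (Dobj k V) m :=
  fun W hW => FISub.mem_Dobj_of_generatedIn h W fun i hi => hW i (by omega)

theorem isZero_Dobj_of_generatedIn_zero (h : GeneratedIn V 0) : IsZero (Dobj k V) :=
  (Functor.isZero_iff_forall_eq_zero _).mpr fun j w =>
    FISub.mem_Dobj_of_generatedIn h ⊥ (fun i hi => by omega) j w

theorem generatedIn_succ_of_generatedIn_Dobj {m : ℕ} (h : GeneratedIn (Dobj k V) m) :
    GeneratedIn V (m + 1) := by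
  refine fun U hU => U.mem_of_forall_mem_map_shift (hU 0 (by omega)) (h _ fun i hi w => ?_)
  obtain ⟨v, rfl⟩ := cokernel_π_app_surjective (toShift k V) _ w
  exact ⟨v, hU (i + 1) (by omega) v, rfl⟩

theorem generatedIn_zero_of_isZero_Dobj (h : IsZero (Dobj k V)) : GeneratedIn V 0 := by
  refine fun U hU => U.mem_of_forall_mem_map_shift (hU 0 le_rfl) fun j w => ?_
  rw [(Functor.isZero_iff_forall_eq_zero _).mp h j w]
  exact zero_mem _

end Derivative

theorem stmt_8_general (k : Type) [CommRing k] (V : FIMod k) :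
    (∀ n : ℕ, 1 ≤ n → GeneratedIn V n → (∀ m, m < n → ¬ GeneratedIn V m) →
      GeneratedIn (Dobj k V) (n - 1) ∧ ¬ IsZero (Dobj k V) ∧
        ∀ m, m < n - 1 → ¬ GeneratedIn (Dobj k V) m) ∧
    (GeneratedIn V 0 → IsZero (Dobj k V)) := by
  refine ⟨fun n hn hgen hmin => ?_, isZero_Dobj_of_generatedIn_zero⟩
  obtain ⟨m, rfl⟩ := Nat.exists_eq_add_of_le' hn
  refine ⟨generatedIn_Dobj_of_generatedIn_succ hgen, fun hD => ?_, fun m' hm' hD => ?_⟩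
  · exact hmin 0 (by omega) (generatedIn_zero_of_isZero_Dobj hD)
  · exact hmin (m' + 1) (by omega) (generatedIn_succ_of_generatedIn_Dobj hD)

/-- `gd(DV) = gd(V) - 1` when `gd(V) ≥ 1`, and `DV = 0` when `gd(V) ≤ 0`. -/
theorem stmt_8 (k : Type) [CommRing k] [IsNoetherianRing k] (V : FIMod k) (hV : FG V) :
    (∀ n : ℕ, 1 ≤ n → GeneratedIn V n → (∀ m, m < n → ¬ GeneratedIn V m) →
      GeneratedIn (Dobj k V) (n - 1) ∧ ¬ IsZero (Dobj k V) ∧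
        ∀ m, m < n - 1 → ¬ GeneratedIn (Dobj k V) m) ∧
    (GeneratedIn V 0 → IsZero (Dobj k V)) :=
  stmt_8_general k V
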